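/- arXiv:2601.20152 — 5 statements merged into one kernel-verified Lean document; each statement's English description precedes it below -/
import Mathlib

section
/- For any square matrix A in R^{n×n} satisfying A·1_n = 0 (each row sums to zero), the average of Π^T A Π over all n×n permutation matrices Π equals (Tr(A)/(n-1)) · P, where P = I_n - (1/n)·1_n 1_n^T is the projection onto the orthogonal complement of the all-ones vector. -/
open Finset Matrix

/-- The permutation matrix of `σ`: entry `(i,j)` is `1` if `σ j = i`. -/
def permMatrix {n : ℕ} (σ : Equiv.Perm (Fin n)) : Matrix (Fin n) (Fin n) ℝ :=
  Matrix.of fun i j => if σ j = i then (1 : ℝ) else 0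

lemma permMatrix_conj_apply {n : ℕ} (σ : Equiv.Perm (Fin n)) (M : Matrix (Fin n) (Fin n) ℝ)
    (i j : Fin n) :
    ((permMatrix σ)ᵀ * M * permMatrix σ) i j = M (σ i) (σ j) := by
  simp [Matrix.mul_apply, permMatrix, transpose_apply, mul_ite, ite_mul,
    Finset.sum_ite_eq, Finset.sum_ite_eq']

/-- For any `A ∈ ℝ^{n×n}` with `A 1_n = 0`, the average of `Πᵀ A Π` over
all permutation matrices `Π` equals `(Tr A / (n-1)) • (I - (1/n) 1 1ᵀ)`. -/
theorem perm_average_of_rowsum_zero {n : ℕ} (hn : 2 ≤ n)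
    (A : Matrix (Fin n) (Fin n) ℝ)
    (hA : A.mulVec (fun _ => (1 : ℝ)) = 0) :
    ((n.factorial : ℝ))⁻¹ •
        ∑ σ : Equiv.Perm (Fin n), (permMatrix σ)ᵀ * A * permMatrix σ =
      (A.trace / ((n : ℝ) - 1)) •
        ((1 : Matrix (Fin n) (Fin n) ℝ) - ((n : ℝ))⁻¹ • Matrix.of fun _ _ => (1 : ℝ)) := by
  have hn0 : (n : ℝ) ≠ 0 := by positivity
  have hn1 : (n : ℝ) - 1 ≠ 0 := by
    have : (2 : ℝ) ≤ (n : ℝ) := by exact_mod_cast hn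
    linarith
  have hfac : (n.factorial : ℝ) ≠ 0 := by positivity
  set g : Fin n → Fin n → ℝ := fun i j => ∑ σ : Equiv.Perm (Fin n), A (σ i) (σ j) with hg
  have hinv : ∀ (τ : Equiv.Perm (Fin n)) (i j : Fin n), g (τ i) (τ j) = g i j := by
    intro τ i j
    simp only [hg]
    exact Fintype.sum_equiv (Equiv.mulRight τ)
      (fun σ => A (σ (τ i)) (σ (τ j))) (fun σ => A (σ i) (σ j)) (fun σ => rfl)
  have hrow : ∀ k : Fin n, ∑ l, A k l = 0 := by
    intro k
    have := congrFun hA k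
    simpa [Matrix.mulVec, dotProduct] using this
  have hgrow : ∀ i : Fin n, ∑ j, g i j = 0 := by
    intro i
    simp only [hg]
    rw [Finset.sum_comm]
    refine Finset.sum_eq_zero fun σ _ => ?_
    rw [Fintype.sum_equiv σ _ (fun l => A (σ i) l) (fun j => rfl)]
    exact hrow (σ i)
  have hgtr : ∑ i, g i i = (n.factorial : ℝ) * A.trace := by
    simp only [hg]
    rw [Finset.sum_comm]
    rw [Finset.sum_congr rfl (fun σ _ => Fintype.sum_equiv σ _ (fun k => A k k) (fun i => rfl))]
    simp [Matrix.trace, Matrix.diag, Fintype.card_perm, mul_comm]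
  have h01 : (⟨0, by omega⟩ : Fin n) ≠ ⟨1, by omega⟩ := by simp [Fin.ext_iff]
  set i0 : Fin n := ⟨0, by omega⟩
  set i1 : Fin n := ⟨1, by omega⟩
  set a : ℝ := g i0 i0 with ha
  set b : ℝ := g i0 i1 with hb
  have hdiag : ∀ i : Fin n, g i i = a := by
    intro i
    rw [ha, ← hinv (Equiv.swap i0 i) i0 i0]
    simp
  have hoff : ∀ i j : Fin n, i ≠ j → g i j = b := by
    intro i j hij
    have hkey : ∃ τ : Equiv.Perm (Fin n), τ i0 = i ∧ τ i1 = j := by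
      refine ⟨(Equiv.swap (Equiv.swap i0 i i1) j) * Equiv.swap i0 i, ?_, ?_⟩
      · simp only [Equiv.Perm.mul_apply, Equiv.swap_apply_left]
        apply Equiv.swap_apply_of_ne_of_ne
        · intro h
          apply h01
          have h2 := congrArg (Equiv.swap i0 i) h
          rwa [Equiv.swap_apply_self, Equiv.swap_apply_right] at h2
        · exact hij
      · simp [Equiv.Perm.mul_apply]
    obtain ⟨τ, h1, h2⟩ := hkey
    rw [hb, ← hinv τ i0 i1, h1, h2]
  have heq1 : (n : ℝ) * a = (n.factorial : ℝ) * A.trace := by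
    rw [← hgtr, Finset.sum_congr rfl (fun i _ => hdiag i)]
    simp [mul_comm]
  have heq2 : a + ((n : ℝ) - 1) * b = 0 := by
    have := hgrow i0
    rw [← Finset.sum_erase_add _ _ (Finset.mem_univ i0)] at this
    rw [Finset.sum_congr rfl (fun j hj => hoff i0 j (Ne.symm (Finset.ne_of_mem_erase hj)))] at this
    rw [Finset.sum_const, Finset.card_erase_of_mem (Finset.mem_univ i0)] at this
    simp only [Finset.card_univ, Fintype.card_fin, nsmul_eq_mul] at this
    have hcast : ((n - 1 : ℕ) : ℝ) = (n : ℝ) - 1 := by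
      push_cast [Nat.cast_sub (show 1 ≤ n by omega)]; ring
    rw [hcast] at this
    linarith
  ext i j
  have hSij : (∑ σ : Equiv.Perm (Fin n), (permMatrix σ)ᵀ * A * permMatrix σ) i j = g i j := by
    simp [hg, permMatrix_conj_apply, Finset.sum_apply, Matrix.sum_apply]
  simp only [Matrix.smul_apply, Matrix.sub_apply, Matrix.one_apply, Matrix.smul_apply,
    Matrix.of_apply, smul_eq_mul, hSij]
  by_cases hij : i = j
  · subst hij
    rw [hdiag i]
    have ha' : a = (n.factorial : ℝ) * A.trace / n := by field_simp; linarith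
    rw [ha', if_pos rfl]
    field_simp
  · rw [hoff i j hij, if_neg hij]
    have ha' : a = (n.factorial : ℝ) * A.trace / n := by field_simp; linarith
    have hb' : b = -(n.factorial : ℝ) * A.trace / ((n : ℝ) * ((n:ℝ)-1)) := by
      rw [ha'] at heq2
      field_simp at heq2 ⊢
      linarith
    rw [hb']
    field_simp
    ring
end

section
/- Define A_n ∈ R^{n×n} whose i-th row for i ∈ [n-1] is (0,...,0, 1, -1/(n-i),...,-1/(n-i)) (with i-1 leading zeros) and whose n-th row is zero, and B_n ∈ R^{n×n} whose i-th row is (0,...,0, 1/(n+1-i),...,1/(n+1-i)) (with i-1 leading zeros). Then the Moore–Penrose pseudoinverse of A_n equals I_n - B_n^T. -/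
open Finset Matrix

/-- The lower-averaging matrix `B_n`: (1-based) entry `(i,j)` equals `1/(n+1-i)` for `j ≥ i`,
and `0` otherwise. -/
noncomputable def lowerAvg (n : ℕ) : Matrix (Fin n) (Fin n) ℝ :=
  Matrix.of fun i j => if i ≤ j then (1 : ℝ) / ((n : ℝ) - (i : ℕ)) else 0

/-- The matrix `A_n`: (1-based) row `i ∈ [n-1]` is `(0_{i-1}, 1, -1/(n-i)·1_{n-i})`, and the
`n`-th row is zero. -/
noncomputable def diffMat (n : ℕ) : Matrix (Fin n) (Fin n) ℝ :=
  Matrix.of fun i j =>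
    if (i : ℕ) + 1 < n then
      (if j = i then (1 : ℝ)
        else if i < j then -(1 : ℝ) / ((n : ℝ) - 1 - (i : ℕ)) else 0)
    else 0

/-!
The rows of `A_n` are pairwise orthogonal, so `A_n A_nᵀ = diag g` with `g i` the squared norm
of row `i`. For any real matrix with orthogonal rows, `Aᵀ diag g⁻¹` satisfies the four Penrose
equations, where `g⁻¹` inverts entrywise and keeps zeros (`0⁻¹ = 0`): `A Aᵀ diag g⁻¹` is the
diagonal projection onto the nonzero rows. Finally `I - B_nᵀ = A_nᵀ diag g⁻¹`, since column `j`
of `I - B_nᵀ`, namely `e_j` minus the average of `e_j, …, e_{n-1}`, is `(n-1-j)/(n-j)` times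
row `j` of `A_n`.
-/

theorem mul_transpose_apply_eq_dotProduct {l m n R : Type*} [Fintype n] [Mul R] [AddCommMonoid R]
    (A : Matrix l n R) (B : Matrix m n R) (i : l) (j : m) : (A * Bᵀ) i j = A i ⬝ᵥ B j :=
  rfl

section Penrose

variable {m n R : Type*} [Fintype n] [DecidableEq m] [Field R] [LinearOrder R]
  [IsStrictOrderedRing R]

def IsMoorePenroseInverse [Fintype m] (A : Matrix m n R) (X : Matrix n m R) : Prop :=
  A * X * A = A ∧ X * A * X = X ∧ (A * X)ᵀ = A * X ∧ (X * A)ᵀ = X * A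

theorem eq_zero_of_mul_transpose_eq_diagonal {A : Matrix m n R} {g : m → R}
    (h : A * Aᵀ = diagonal g) {i : m} (hi : g i = 0) : A i = 0 := by
  rwa [← dotProduct_self_eq_zero, ← mul_transpose_apply_eq_dotProduct, h, diagonal_apply_eq]

theorem isMoorePenroseInverse_transpose_mul_diagonal_inv [Fintype m] {A : Matrix m n R}
    {g : m → R} (h : A * Aᵀ = diagonal g) : IsMoorePenroseInverse A (Aᵀ * diagonal g⁻¹) := by
  have hAX : A * (Aᵀ * diagonal g⁻¹) = diagonal (g * g⁻¹) := by
    rw [← Matrix.mul_assoc, h, diagonal_mul_diagonal, Pi.mul_def]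
  refine ⟨?_, ?_, ?_, ?_⟩
  · ext i k
    rw [hAX, diagonal_mul, Pi.mul_apply, Pi.inv_apply]
    by_cases hi : g i = 0
    · simp [eq_zero_of_mul_transpose_eq_diagonal h hi]
    · rw [mul_inv_cancel₀ hi, one_mul]
  · rw [Matrix.mul_assoc, hAX, Matrix.mul_assoc, diagonal_mul_diagonal]
    congr 2
    funext i
    simp only [Pi.mul_apply, Pi.inv_apply]
    by_cases hi : g i = 0 <;> simp [hi]
  · rw [hAX, diagonal_transpose]
  · rw [transpose_mul, transpose_mul, transpose_transpose, diagonal_transpose, Matrix.mul_assoc]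

end Penrose

theorem sub_one_sub_pos_of_succ_lt {n i : ℕ} (h : i + 1 < n) : (0 : ℝ) < n - 1 - i := by
  have : (i : ℝ) + 1 < n := by exact_mod_cast h
  linarith

theorem ite_lt_dotProduct_ite_lt {n : ℕ} (i j : Fin n) :
    (fun k => if i < k then (1 : ℝ) else 0) ⬝ᵥ (fun k => if j < k then 1 else 0) =
      ((n - 1 - max (i : ℕ) j : ℕ) : ℝ) := by
  simp only [dotProduct, ite_zero_mul_ite_zero, mul_one, ← max_lt_iff]
  rw [sum_boole, filter_lt_eq_Ioi, Fin.card_Ioi, Fin.coe_max]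

theorem diffMat_row {n : ℕ} {i : Fin n} (hi : (i : ℕ) + 1 < n) :
    diffMat n i =
      Pi.single i 1 - (1 / ((n : ℝ) - 1 - (i : ℕ))) • fun k => if i < k then 1 else 0 := by
  ext k
  rcases lt_trichotomy k i with hk | rfl | hk
  · simp [diffMat, hi, hk.ne, hk.not_gt]
  · simp [diffMat, hi]
  · simp [diffMat, hi, hk.ne', hk, neg_div]

theorem diffMat_row_eq_zero {n : ℕ} {i : Fin n} (hi : ¬(i : ℕ) + 1 < n) : diffMat n i = 0 := by
  ext k
  simp [diffMat, hi]

noncomputable def diffMatRowNormSq (n : ℕ) (i : Fin n) : ℝ :=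
  if (i : ℕ) + 1 < n then ((n : ℝ) - (i : ℕ)) / ((n : ℝ) - 1 - (i : ℕ)) else 0

theorem diffMat_mul_transpose (n : ℕ) :
    diffMat n * (diffMat n)ᵀ = diagonal (diffMatRowNormSq n) := by
  ext i j
  rw [mul_transpose_apply_eq_dotProduct]
  by_cases hi : (i : ℕ) + 1 < n
  swap
  · rw [diffMat_row_eq_zero hi, zero_dotProduct, diagonal_apply, diffMatRowNormSq, if_neg hi,
      ite_self]
  by_cases hj : (j : ℕ) + 1 < n
  swap
  · rw [diffMat_row_eq_zero hj, dotProduct_zero, diagonal_apply_ne _ (by rintro rfl; exact hj hi)]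
  rw [diffMat_row hi, diffMat_row hj]
  simp only [sub_dotProduct, dotProduct_sub, smul_dotProduct, dotProduct_smul,
    single_one_dotProduct, dotProduct_single_one, Pi.sub_apply, Pi.smul_apply, Pi.single_apply,
    ite_lt_dotProduct_ite_lt, smul_eq_mul]
  have hi' := (sub_one_sub_pos_of_succ_lt hi).ne'
  have hj' := (sub_one_sub_pos_of_succ_lt hj).ne'
  rcases lt_trichotomy i j with hij | rfl | hij
  · rw [max_eq_right (Fin.le_def.mp hij.le), Nat.cast_sub (by omega), Nat.cast_sub (by omega),
      if_neg hij.ne', if_pos hij, if_neg (lt_asymm hij), diagonal_apply_ne _ hij.ne]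
    field_simp
    ring
  · rw [max_self, Nat.cast_sub (by omega), Nat.cast_sub (by omega), if_pos rfl,
      if_neg (lt_irrefl i), diagonal_apply_eq, diffMatRowNormSq, if_pos hi]
    field_simp
    ring
  · rw [max_eq_left (Fin.le_def.mp hij.le), Nat.cast_sub (by omega), Nat.cast_sub (by omega),
      if_neg hij.ne, if_neg (lt_asymm hij), if_pos hij, diagonal_apply_ne _ hij.ne']
    field_simp
    ring

theorem one_sub_lowerAvg_transpose (n : ℕ) :
    1 - (lowerAvg n)ᵀ = (diffMat n)ᵀ * diagonal (diffMatRowNormSq n)⁻¹ := by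
  ext i j
  rw [mul_diagonal, transpose_apply, Matrix.sub_apply, transpose_apply, lowerAvg, of_apply,
    Pi.inv_apply, diffMatRowNormSq]
  by_cases hj : (j : ℕ) + 1 < n
  swap
  · rw [diffMat_row_eq_zero hj, Pi.zero_apply, zero_mul]
    rcases (Fin.le_def.mpr (by have := i.isLt; omega) : i ≤ j).eq_or_lt with rfl | hij
    · have hi1 : (n : ℝ) - (i : ℕ) = 1 := by
        rw [← Nat.cast_sub i.isLt.le, show n - i = 1 by omega, Nat.cast_one]
      rw [if_pos le_rfl, hi1, one_apply_eq, div_one, sub_self]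
    · rw [if_neg hij.not_ge, one_apply_ne hij.ne, sub_zero]
  have hj₁ := sub_one_sub_pos_of_succ_lt hj
  have hj₂ : (n : ℝ) - (j : ℕ) ≠ 0 := by linarith
  rw [if_pos hj, inv_div, diffMat, of_apply, if_pos hj]
  rcases lt_trichotomy i j with hij | rfl | hij
  · rw [if_neg hij.ne, if_neg (lt_asymm hij), if_neg hij.not_ge, one_apply_ne hij.ne]
    simp
  · rw [if_pos rfl, if_pos le_rfl, one_apply_eq]
    field_simp
    ring
  · rw [if_neg hij.ne', if_pos hij, if_pos hij.le, one_apply_ne hij.ne']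
    field_simp
    ring

theorem diffMat_pinv_general (n : ℕ) :
    diffMat n * ((1 : Matrix (Fin n) (Fin n) ℝ) - (lowerAvg n)ᵀ) * diffMat n = diffMat n ∧
    ((1 : Matrix (Fin n) (Fin n) ℝ) - (lowerAvg n)ᵀ) * diffMat n *
        ((1 : Matrix (Fin n) (Fin n) ℝ) - (lowerAvg n)ᵀ) =
      (1 : Matrix (Fin n) (Fin n) ℝ) - (lowerAvg n)ᵀ ∧
    (diffMat n * ((1 : Matrix (Fin n) (Fin n) ℝ) - (lowerAvg n)ᵀ))ᵀ =
      diffMat n * ((1 : Matrix (Fin n) (Fin n) ℝ) - (lowerAvg n)ᵀ) ∧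
    (((1 : Matrix (Fin n) (Fin n) ℝ) - (lowerAvg n)ᵀ) * diffMat n)ᵀ =
      ((1 : Matrix (Fin n) (Fin n) ℝ) - (lowerAvg n)ᵀ) * diffMat n := by
  rw [one_sub_lowerAvg_transpose]
  exact isMoorePenroseInverse_transpose_mul_diagonal_inv (diffMat_mul_transpose n)

/-- The Moore–Penrose pseudoinverse of `A_n` is `I - Bₙᵀ`, expressed via the
four Penrose conditions (which uniquely characterize the Moore–Penrose pseudoinverse):
`A X A = A`, `X A X = X`, `(A X)ᵀ = A X` and `(X A)ᵀ = X A` for `X = I - Bₙᵀ`. -/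
theorem diffMat_pinv (n : ℕ) (hn : 2 ≤ n) :
    diffMat n * ((1 : Matrix (Fin n) (Fin n) ℝ) - (lowerAvg n)ᵀ) * diffMat n = diffMat n ∧
    ((1 : Matrix (Fin n) (Fin n) ℝ) - (lowerAvg n)ᵀ) * diffMat n *
        ((1 : Matrix (Fin n) (Fin n) ℝ) - (lowerAvg n)ᵀ) =
      (1 : Matrix (Fin n) (Fin n) ℝ) - (lowerAvg n)ᵀ ∧
    (diffMat n * ((1 : Matrix (Fin n) (Fin n) ℝ) - (lowerAvg n)ᵀ))ᵀ =
      diffMat n * ((1 : Matrix (Fin n) (Fin n) ℝ) - (lowerAvg n)ᵀ) ∧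
    (((1 : Matrix (Fin n) (Fin n) ℝ) - (lowerAvg n)ᵀ) * diffMat n)ᵀ =
      ((1 : Matrix (Fin n) (Fin n) ℝ) - (lowerAvg n)ᵀ) * diffMat n :=
  diffMat_pinv_general n
end

section
/- With A_n and B_n as defined, A_n^T (I_n - B_n) equals the projection I_n - (1/n)·1_n 1_n^T onto the orthogonal complement of the all-ones vector. -/
/-!
Let `u k` be the uniform probability vector on the coordinates `≥ k` (and `u n = 0`). Row `k` of
`Bₙ` is `u k`, and row `k < n - 1` of `Aₙ` is `e k - u (k + 1)`. The last row of `I - Bₙ` vanishes,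
so the last row of `Aₙ` may be replaced by `e (n - 1) - u n` as well. From
`(n - k) • u k = e k + (n - k - 1) • u (k + 1)` we get `(Bₙ)ₖⱼ • (e k - u (k + 1)) = u k - u (k + 1)`
for `k ≤ j`, so column `j` of `Aₙᵀ (I - Bₙ)` is `e j - u (j + 1) - ∑_{k ≤ j} (u k - u (k + 1))`,
which telescopes to `e j - u 0 = e j - 𝟙 / n`.
-/

open Finset Matrix

/-- Row `k` of `lowerAvg n`, defined for every `k : ℕ` so that `tailAvg n n = 0` is available. -/
noncomputable def tailAvg (n k : ℕ) : Fin n → ℝ :=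
  fun i => if k ≤ (i : ℕ) then 1 / ((n : ℝ) - k) else 0

section

variable {n : ℕ}

lemma lowerAvg_apply (k j : Fin n) : lowerAvg n k j = tailAvg n k j := rfl

lemma tailAvg_zero : tailAvg n 0 = fun _ => (n : ℝ)⁻¹ := by
  ext i
  simp [tailAvg]

lemma one_sub_lowerAvg_of_succ_eq (k j : Fin n) (hk : (k : ℕ) + 1 = n) :
    (1 - lowerAvg n) k j = 0 := by
  rcases eq_or_ne k j with rfl | hkj
  · have hn : (n : ℝ) - k = 1 := by
      have : (n : ℝ) = k + 1 := by exact_mod_cast hk.symm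
      linarith
    simp [lowerAvg_apply, tailAvg, hn]
  · have : ¬ (k : ℕ) ≤ j := fun h => hkj (Fin.ext (by have := j.2; omega))
    simp [lowerAvg_apply, tailAvg, one_apply_ne hkj, this]

lemma diffMat_row_s3 (k : Fin n) (hk : (k : ℕ) + 1 < n) :
    diffMat n k = Pi.single k 1 - tailAvg n (k + 1) := by
  ext i
  rcases lt_trichotomy i k with hik | rfl | hki
  · simp [diffMat, tailAvg, hk, hik.ne, hik.not_gt]
  · simp [diffMat, tailAvg, hk]
  · simp only [diffMat, of_apply, hk, ↓reduceIte, hki.ne', hki, Pi.sub_apply, ne_eq,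
      not_false_eq_true, Pi.single_eq_of_ne, tailAvg, Nat.succ_le_of_lt (Fin.lt_def.1 hki),
      Nat.cast_add, Nat.cast_one, one_div, zero_sub]
    ring

lemma tailAvg_sub_tailAvg_succ (k : Fin n) :
    tailAvg n k - tailAvg n (k + 1) = (1 / ((n : ℝ) - k)) • (Pi.single k 1 - tailAvg n (k + 1)) := by
  ext i
  rcases lt_trichotomy i k with hik | rfl | hki
  · have h1 : ¬ (k : ℕ) ≤ i := by omega
    have h2 : ¬ (k : ℕ) + 1 ≤ i := by omega
    simp [tailAvg, hik.ne, h1, h2]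
  · simp [tailAvg]
  · have hki' : (k : ℕ) < i := hki
    have hpos : (0 : ℝ) < n - (k + 1) := by
      have : ((k : ℕ) + 1 : ℝ) < n := by exact_mod_cast (show (k : ℕ) + 1 < n by omega)
      linarith
    have hne : (n : ℝ) - k ≠ 0 := by linarith
    simp only [Pi.sub_apply, tailAvg, hki'.le, ↓reduceIte, one_div, Nat.succ_le_of_lt hki',
      Nat.cast_add, Nat.cast_one, Pi.smul_apply, ne_eq, hki.ne', not_false_eq_true,
      Pi.single_eq_of_ne, zero_sub, smul_eq_mul, mul_neg]
    field_simp
    ring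

lemma sum_lowerAvg_smul (j : Fin n) :
    ∑ k, lowerAvg n k j • (Pi.single k 1 - tailAvg n (k + 1)) =
      tailAvg n 0 - tailAvg n (j + 1) := by
  calc ∑ k, lowerAvg n k j • (Pi.single k 1 - tailAvg n (k + 1))
      = ∑ k : Fin n, if (k : ℕ) ≤ j then tailAvg n k - tailAvg n (k + 1) else 0 := by
        refine sum_congr rfl fun k _ => ?_
        split_ifs with h
        · simp [tailAvg_sub_tailAvg_succ, lowerAvg_apply, tailAvg, h]
        · simp [lowerAvg_apply, tailAvg, h]
    _ = ∑ k ∈ range (j + 1), (tailAvg n k - tailAvg n (k + 1)) := by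
        rw [Fin.sum_univ_eq_sum_range
          (fun k => if k ≤ j then tailAvg n k - tailAvg n (k + 1) else 0), ← sum_filter]
        congr 1
        ext k
        simp only [mem_filter, mem_range]
        omega
    _ = tailAvg n 0 - tailAvg n (j + 1) := sum_range_sub' _ _

lemma sum_one_sub_lowerAvg_smul_diffMat (j : Fin n) :
    ∑ k, (1 - lowerAvg n) k j • diffMat n k = Pi.single j 1 - tailAvg n 0 := by
  have hrow : ∀ k, (1 - lowerAvg n) k j • diffMat n k
      = (1 - lowerAvg n) k j • (Pi.single k 1 - tailAvg n (k + 1)) := by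
    intro k
    rcases Nat.lt_or_ge ((k : ℕ) + 1) n with hk | hk
    · rw [diffMat_row_s3 k hk]
    · rw [one_sub_lowerAvg_of_succ_eq k j (by omega), zero_smul, zero_smul]
  rw [sum_congr rfl fun k _ => hrow k]
  simp only [Matrix.sub_apply, sub_smul, sum_sub_distrib, one_apply, ite_smul, one_smul,
    zero_smul, sum_ite_eq', mem_univ, if_true, sum_lowerAvg_smul]
  abel

end

theorem diffMat_transpose_mul_general (n : ℕ) :
    (diffMat n)ᵀ * ((1 : Matrix (Fin n) (Fin n) ℝ) - lowerAvg n) =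
      (1 : Matrix (Fin n) (Fin n) ℝ) - ((n : ℝ))⁻¹ • Matrix.of fun _ _ => (1 : ℝ) := by
  ext i j
  rw [← transpose_apply (_ * _), transpose_mul, transpose_transpose, mul_apply_eq_vecMul,
    vecMul_eq_sum]
  simp only [transpose_apply]
  rw [sum_one_sub_lowerAvg_smul_diffMat, tailAvg_zero]
  simp [one_apply, Pi.single_apply]

/-- `Aₙᵀ (I - Bₙ) = I - (1/n)·1ₙ1ₙᵀ`, the projection onto the orthogonal
complement of the all-ones vector. -/
theorem diffMat_transpose_mul (n : ℕ) (hn : 2 ≤ n) :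
    (diffMat n)ᵀ * ((1 : Matrix (Fin n) (Fin n) ℝ) - lowerAvg n) =
      (1 : Matrix (Fin n) (Fin n) ℝ) - ((n : ℝ))⁻¹ • Matrix.of fun _ _ => (1 : ℝ) :=
  diffMat_transpose_mul_general n
end

section
/- With B_n as defined and ε_n = (H_n - 1)/(n - H_n) for n ≥ 2, the average of Π^T B_n Π over all n×n permutation matrices Π equals (1/(1+ε_n))·P_{1} + (ε_n/(1+ε_n))·I_n, where P_{1} = (1/n)·1_n 1_n^T is the projection onto the span of the all-ones vector. -/
open Finset Matrix

/-- The `n`-th harmonic number `H_n = 1 + 1/2 + ⋯ + 1/n`. -/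
noncomputable def harmonic' (n : ℕ) : ℝ := ∑ j ∈ Finset.range n, (1 : ℝ) / (j + 1)

/-- `ε_n = (H_n - 1)/(n - H_n)`. -/
noncomputable def epsN (n : ℕ) : ℝ := (harmonic' n - 1) / ((n : ℝ) - harmonic' n)

/-!
Conjugating by the permutation matrix of `σ` turns `A` into `(A (σ i) (σ j))ᵢⱼ`. Since the
symmetric group acts 2-transitively, the average over all `σ` has a constant diagonal, equal to
`trace A / n`, and a constant off-diagonal part, equal to `(∑ᵢⱼ Aᵢⱼ - trace A) / (n (n - 1))`.
For `B_n` the trace is `H_n` and every row sums to `1`, so the average is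
`(H_n - 1)/(n - 1) • I + (n - H_n)/(n - 1) • P₁`, and `1/(1 + ε_n) = (n - H_n)/(n - 1)`.
-/

open Equiv

section PermSums

variable {ι R : Type*} [Fintype ι] [DecidableEq ι] [AddCommMonoid R]

lemma sum_perm_sum_apply (g : ι → R) :
    ∑ σ : Perm ι, ∑ k, g (σ k) = (Fintype.card ι).factorial • ∑ k, g k := by
  simp only [Equiv.sum_comp, sum_const, card_univ, Fintype.card_perm]

lemma sum_perm_apply_mul_apply (A : Matrix ι ι R) (τ : Perm ι) (i j : ι) :
    ∑ σ : Perm ι, A (σ (τ i)) (σ (τ j)) = ∑ σ : Perm ι, A (σ i) (σ j) :=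
  Equiv.sum_comp (Equiv.mulRight τ) fun σ => A (σ i) (σ j)

lemma sum_perm_apply_self_eq (A : Matrix ι ι R) (i k : ι) :
    ∑ σ : Perm ι, A (σ k) (σ k) = ∑ σ : Perm ι, A (σ i) (σ i) := by
  simpa using sum_perm_apply_mul_apply A (swap i k) i i

lemma sum_perm_apply_apply_eq_of_ne (A : Matrix ι ι R) {i j k l : ι} (hij : i ≠ j)
    (hkl : k ≠ l) : ∑ σ : Perm ι, A (σ k) (σ l) = ∑ σ : Perm ι, A (σ i) (σ j) := by
  obtain ⟨τ, rfl, rfl⟩ :=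
    MulAction.is_two_pretransitive_iff.mp (Perm.isMultiplyPretransitive ι 2) hij hkl
  exact sum_perm_apply_mul_apply A τ i j

lemma sum_sum_perm_apply_self (A : Matrix ι ι R) :
    ∑ k, ∑ σ : Perm ι, A (σ k) (σ k) = (Fintype.card ι).factorial • A.trace := by
  rw [sum_comm]
  exact sum_perm_sum_apply fun k => A k k

lemma card_smul_sum_perm_apply_self (A : Matrix ι ι R) (i : ι) :
    Fintype.card ι • ∑ σ : Perm ι, A (σ i) (σ i) = (Fintype.card ι).factorial • A.trace := by
  rw [← sum_sum_perm_apply_self, ← card_univ, ← sum_const]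
  exact sum_congr rfl fun k _ => (sum_perm_apply_self_eq A i k).symm

lemma sum_sum_sum_perm_apply_apply (A : Matrix ι ι R) :
    ∑ k, ∑ l, ∑ σ : Perm ι, A (σ k) (σ l) = (Fintype.card ι).factorial • ∑ k, ∑ l, A k l := by
  calc ∑ k, ∑ l, ∑ σ : Perm ι, A (σ k) (σ l) = ∑ σ : Perm ι, ∑ k, ∑ l, A (σ k) (σ l) :=
        (sum_congr rfl fun _ _ => sum_comm).trans sum_comm
    _ = ∑ σ : Perm ι, ∑ k, ∑ l, A (σ k) l := by simp only [Equiv.sum_comp]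
    _ = _ := sum_perm_sum_apply fun k => ∑ l, A k l

lemma factorial_smul_sum_sum_eq_of_ne (A : Matrix ι ι R) {i j : ι} (hij : i ≠ j) :
    (Fintype.card ι).factorial • ∑ k, ∑ l, A k l =
      (Fintype.card ι).factorial • A.trace +
        Fintype.card ι • (Fintype.card ι - 1) • ∑ σ : Perm ι, A (σ i) (σ j) := by
  have hrow (k : ι) : ∑ l, ∑ σ : Perm ι, A (σ k) (σ l) =
      ∑ σ : Perm ι, A (σ k) (σ k) + (Fintype.card ι - 1) • ∑ σ : Perm ι, A (σ i) (σ j) := by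
    rw [Fintype.sum_eq_add_sum_compl k, sum_congr rfl fun l hl =>
      sum_perm_apply_apply_eq_of_ne A hij (Ne.symm (mem_compl.mp hl ∘ mem_singleton.mpr)),
      sum_const, card_compl, card_singleton]
  rw [← sum_sum_sum_perm_apply_apply, sum_congr rfl fun k _ => hrow k, sum_add_distrib,
    sum_sum_perm_apply_self, sum_const, card_univ]

end PermSums

lemma transpose_permMatrix_mul_mul_permMatrix {n : ℕ} (σ : Perm (Fin n))
    (A : Matrix (Fin n) (Fin n) ℝ) : (permMatrix σ)ᵀ * A * permMatrix σ = A.submatrix σ σ := by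
  ext i j
  simp [mul_apply, permMatrix, mul_ite, ite_mul]

lemma harmonic'_lt_self {n : ℕ} (hn : 2 ≤ n) : harmonic' n < n := by
  have hlt : ∑ j ∈ range n, (1 : ℝ) / (j + 1) < ∑ _j ∈ range n, 1 :=
    sum_lt_sum (fun j _ => by rw [div_le_one (by positivity)]; simp)
      ⟨1, mem_range.mpr hn, by norm_num⟩
  simpa [harmonic'] using hlt

lemma trace_lowerAvg (n : ℕ) : (lowerAvg n).trace = harmonic' n := by
  rw [trace, harmonic', ← sum_range_reflect]
  simp only [diag_apply, lowerAvg, of_apply, le_refl, if_true]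
  rw [Fin.sum_univ_eq_sum_range (fun k => (1 : ℝ) / (n - k))]
  refine sum_congr rfl fun j hj => ?_
  rw [Nat.cast_sub (by simp at hj; omega), Nat.cast_sub (by simp at hj; omega)]
  ring

lemma sum_lowerAvg_apply {n : ℕ} (i : Fin n) : ∑ j, lowerAvg n i j = 1 := by
  have hi : ((i : ℕ) : ℝ) < n := by exact_mod_cast i.isLt
  simp only [lowerAvg, of_apply, ← sum_filter, sum_const, nsmul_eq_mul]
  rw [filter_le_eq_Ici, Fin.card_Ici, Nat.cast_sub i.isLt.le]
  field_simp [sub_ne_zero.mpr hi.ne']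

lemma sum_perm_lowerAvg_apply_self {n : ℕ} (i : Fin n) :
    ∑ σ : Perm (Fin n), lowerAvg n (σ i) (σ i) = n.factorial * harmonic' n / n := by
  have hn : (n : ℝ) ≠ 0 := by exact_mod_cast (Fin.pos i).ne'
  have h := card_smul_sum_perm_apply_self (lowerAvg n) i
  rw [Fintype.card_fin, trace_lowerAvg, nsmul_eq_mul, nsmul_eq_mul] at h
  rw [eq_div_iff hn]
  linear_combination h

lemma sum_perm_lowerAvg_apply_of_ne {n : ℕ} {i j : Fin n} (hij : i ≠ j) :
    ∑ σ : Perm (Fin n), lowerAvg n (σ i) (σ j) =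
      n.factorial * (n - harmonic' n) / (n * (n - 1)) := by
  have hn : (2 : ℝ) ≤ n := by exact_mod_cast Fin.nontrivial_iff_two_le.mp ⟨i, j, hij⟩
  have h := factorial_smul_sum_sum_eq_of_ne (lowerAvg n) hij
  simp only [Fintype.card_fin, trace_lowerAvg, sum_lowerAvg_apply, sum_const, card_univ,
    nsmul_eq_mul, Nat.cast_pred (Fin.pos i)] at h
  rw [eq_div_iff (mul_ne_zero (by linarith) (by linarith))]
  linear_combination -h

/-- The average of `Πᵀ Bₙ Π` over all permutation matrices `Π` equals
`(1/(1+εₙ)) • P₁ + (εₙ/(1+εₙ)) • I`, where `P₁ = (1/n)·1ₙ1ₙᵀ`. -/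
theorem perm_average_lowerAvg (n : ℕ) (hn : 2 ≤ n) :
    ((n.factorial : ℝ))⁻¹ •
        ∑ σ : Equiv.Perm (Fin n), (permMatrix σ)ᵀ * lowerAvg n * permMatrix σ =
      (1 / (1 + epsN n)) • ((n : ℝ))⁻¹ • (Matrix.of fun _ _ => (1 : ℝ)) +
        (epsN n / (1 + epsN n)) • (1 : Matrix (Fin n) (Fin n) ℝ) := by
  have hn' : (2 : ℝ) ≤ n := by exact_mod_cast hn
  have hn1 : (n : ℝ) - 1 ≠ 0 := by linarith
  have hH : (n : ℝ) - harmonic' n ≠ 0 := sub_ne_zero.mpr (harmonic'_lt_self hn).ne'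
  have hε : 1 + epsN n = (n - 1) / (n - harmonic' n) := by
    rw [epsN]
    field_simp
    ring
  ext i j
  simp only [Matrix.smul_apply, Matrix.sum_apply, transpose_permMatrix_mul_mul_permMatrix,
    submatrix_apply, Matrix.add_apply, one_apply, of_apply, smul_eq_mul]
  rcases eq_or_ne i j with rfl | hij
  · rw [sum_perm_lowerAvg_apply_self, if_pos rfl, hε, epsN]
    field_simp
    ring
  · rw [sum_perm_lowerAvg_apply_of_ne hij, if_neg hij, hε]
    field_simp
    ring
end

section
/- Let Z ∈ R^{n×m} be a random matrix with E[‾exp(λZ)] ≤ exp(λ²a²/2) for all λ ∈ R, where ‾exp(A) := (1/(n+m))·Tr exp([[0, A],[A^T, 0]]). Then for all δ ∈ (0,1), P(‖Z‖ ≥ a·√(2 log((n+m)/δ))) ≤ δ, with ‖·‖ the operator norm. -/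
open MeasureTheory Matrix

/-- Operator (spectral) norm of a real matrix, via its action on Euclidean space. -/
noncomputable def opNorm {m n : Type*} [Fintype m] [Fintype n] [DecidableEq n]
    (A : Matrix m n ℝ) : ℝ :=
  ‖LinearMap.toContinuousLinearMap (Matrix.toEuclideanLin A)‖

/-- The symmetric dilation `[[0, A], [Aᵀ, 0]]` of a rectangular matrix `A`. -/
noncomputable def dilation {n m : ℕ} (A : Matrix (Fin n) (Fin m) ℝ) :
    Matrix (Fin n ⊕ Fin m) (Fin n ⊕ Fin m) ℝ :=
  Matrix.fromBlocks 0 A Aᵀ 0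

/-- The normalized trace exponential `‾exp(A) = (1/(n+m))·Tr exp([[0,A],[Aᵀ,0]])`. -/
noncomputable def obexp {n m : ℕ} (A : Matrix (Fin n) (Fin m) ℝ) : ℝ :=
  ((n + m : ℕ) : ℝ)⁻¹ * (NormedSpace.exp (dilation A)).trace

/-! The operator norm of the symmetric matrix `dilation Z` is `|x|` for some `x` in its spectrum,
and that spectrum is symmetric under negation (conjugate by `diag(1, -1)`), so
`exp (λ‖Z‖) ≤ exp (λ‖dilation Z‖) ≤ Tr exp (λ · dilation Z) = (n + m) · ‾exp(λZ)` for `λ ≥ 0`.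
Markov's inequality and the MGF bound then give `P(‖Z‖ ≥ t) ≤ (n + m) · exp (λ²a²/2 - λt)`,
and `t = a√(2L)`, `λ = t / a²` with `L = log ((n + m) / δ)` turn the right-hand side into `δ`. -/

namespace Matrix.IsHermitian

variable {ι : Type*} [Fintype ι] [DecidableEq ι] {B : Matrix ι ι ℝ}

theorem exists_mem_spectrum_abs_eq_opNorm [Nonempty ι] (hB : B.IsHermitian) :
    ∃ x ∈ spectrum ℝ B, |x| = opNorm B := by
  have hT : IsSelfAdjoint (toEuclideanCLM (n := ι) (𝕜 := ℝ) B) := hB.isSelfAdjoint.map _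
  have hspec : spectrum ℝ (toEuclideanCLM (n := ι) (𝕜 := ℝ) B) = spectrum ℝ B :=
    AlgEquiv.spectrum_eq (toEuclideanCLM (n := ι) (𝕜 := ℝ)).toAlgEquiv B
  have hne : (spectrum ℝ (toEuclideanCLM (n := ι) (𝕜 := ℝ) B)).Nonempty := by
    rw [hspec, hB.spectrum_real_eq_range_eigenvalues]
    exact Set.range_nonempty _
  obtain ⟨x, hx, hxT⟩ := spectrum.exists_nnnorm_eq_spectralRadius_of_nonempty hne
  have := hxT.trans (ContinuousLinearMap.spectralRadius_eq_nnnorm _ hT)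
  exact ⟨x, hspec ▸ hx, congrArg NNReal.toReal (ENNReal.coe_inj.1 this)⟩

theorem trace_exp_eq_sum_exp_eigenvalues (hB : B.IsHermitian) :
    (NormedSpace.exp B).trace = ∑ i, Real.exp (hB.eigenvalues i) := by
  set U := Unitary.toUnits hB.eigenvectorUnitary
  have hB' : B = (U : Matrix ι ι ℝ) * diagonal (RCLike.ofReal ∘ hB.eigenvalues) *
      ((U⁻¹ : (Matrix ι ι ℝ)ˣ) : Matrix ι ι ℝ) := hB.spectral_theorem
  conv_lhs => rw [hB', Matrix.exp_units_conj, trace_units_conj, Matrix.exp_diagonal,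
    trace_diagonal]
  simp [Real.exp_eq_exp_ℝ]

theorem exp_le_trace_exp (hB : B.IsHermitian) {x : ℝ} (hx : x ∈ spectrum ℝ B) :
    Real.exp x ≤ (NormedSpace.exp B).trace := by
  obtain ⟨i, rfl⟩ := hB.spectrum_real_eq_range_eigenvalues ▸ hx
  rw [hB.trace_exp_eq_sum_exp_eigenvalues]
  exact Finset.single_le_sum (fun j _ => (Real.exp_pos _).le) (Finset.mem_univ i)

theorem exp_opNorm_le_trace_exp [Nonempty ι] (hB : B.IsHermitian)
    (hneg : (NormedSpace.exp (-B)).trace = (NormedSpace.exp B).trace) :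
    Real.exp (opNorm B) ≤ (NormedSpace.exp B).trace := by
  obtain ⟨x, hx, hxB⟩ := hB.exists_mem_spectrum_abs_eq_opNorm
  rcases abs_cases x with ⟨hx_abs, -⟩ | ⟨hx_abs, -⟩
  · rw [← hxB, hx_abs]
    exact hB.exp_le_trace_exp hx
  · rw [← hxB, hx_abs, ← hneg]
    exact hB.neg.exp_le_trace_exp (spectrum.neg_eq (R := ℝ) B ▸ Set.neg_mem_neg.2 hx)

end Matrix.IsHermitian

theorem opNorm_smul {m n : Type*} [Fintype m] [Fintype n] [DecidableEq n] (c : ℝ)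
    (A : Matrix m n ℝ) : opNorm (c • A) = |c| * opNorm A := by
  simp [opNorm, norm_smul]

theorem measurable_opNorm {Ω m n : Type*} [MeasurableSpace Ω] [Fintype m] [Fintype n]
    [DecidableEq n] {Z : Ω → Matrix m n ℝ} (hZ : ∀ i j, Measurable fun ω => Z ω i j) :
    Measurable fun ω => opNorm (Z ω) := by
  -- Mathlib puts no measurable structure on `Matrix`; use the product one.
  let _ : MeasurableSpace (Matrix m n ℝ) := inferInstanceAs (MeasurableSpace (m → n → ℝ))
  have _ : BorelSpace (Matrix m n ℝ) := inferInstanceAs (BorelSpace (m → n → ℝ))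
  have hcont : Continuous (opNorm : Matrix m n ℝ → ℝ) :=
    continuous_norm.comp (LinearMap.continuous_of_finiteDimensional
      (LinearMap.toContinuousLinearMap.toLinearMap ∘ₗ
        (toEuclideanLin (𝕜 := ℝ) (m := m) (n := n)).toLinearMap))
  exact hcont.measurable.comp (measurable_pi_lambda _ fun i => measurable_pi_lambda _ (hZ i))

section Dilation

variable {n m : ℕ}

theorem dilation_isHermitian (A : Matrix (Fin n) (Fin m) ℝ) : (dilation A).IsHermitian := by
  simp [IsHermitian, dilation, fromBlocks_transpose]

theorem trace_exp_neg_dilation (A : Matrix (Fin n) (Fin m) ℝ) :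
    (NormedSpace.exp (-dilation A)).trace = (NormedSpace.exp (dilation A)).trace := by
  have hS : fromBlocks 1 0 0 (-1) * fromBlocks 1 0 0 (-1) =
      (1 : Matrix (Fin n ⊕ Fin m) (Fin n ⊕ Fin m) ℝ) := by
    simp [fromBlocks_multiply, ← fromBlocks_one]
  let S : (Matrix (Fin n ⊕ Fin m) (Fin n ⊕ Fin m) ℝ)ˣ := ⟨_, _, hS, hS⟩
  have hconj : (S : Matrix _ _ ℝ) * dilation A * ((S⁻¹ : (Matrix _ _ ℝ)ˣ) : Matrix _ _ ℝ) =
      -dilation A := by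
    simp [S, dilation, fromBlocks_multiply, fromBlocks_neg]
  rw [← hconj, Matrix.exp_units_conj, trace_units_conj]

theorem opNorm_le_opNorm_dilation (A : Matrix (Fin n) (Fin m) ℝ) :
    opNorm A ≤ opNorm (dilation A) := by
  refine ContinuousLinearMap.opNorm_le_bound _ (norm_nonneg _) fun y => ?_
  set v : EuclideanSpace ℝ (Fin n ⊕ Fin m) := WithLp.toLp 2 (Sum.elim 0 y)
  have hv : ‖v‖ = ‖y‖ := by
    simp [v, EuclideanSpace.norm_eq, Fintype.sum_sum_type]
  have hDv : ‖toEuclideanLin (dilation A) v‖ = ‖toEuclideanLin A y‖ := by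
    simp [v, dilation, EuclideanSpace.norm_eq, Fintype.sum_sum_type, toLpLin_apply,
      fromBlocks_mulVec]
  calc ‖toEuclideanLin A y‖ = ‖toEuclideanLin (dilation A) v‖ := hDv.symm
    _ ≤ opNorm (dilation A) * ‖v‖ :=
      (LinearMap.toContinuousLinearMap (toEuclideanLin (dilation A))).le_opNorm v
    _ = opNorm (dilation A) * ‖y‖ := by rw [hv]

theorem exp_opNorm_le_trace_exp_dilation (hnm : 0 < n + m) (A : Matrix (Fin n) (Fin m) ℝ) :
    Real.exp (opNorm A) ≤ (NormedSpace.exp (dilation A)).trace := by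
  have : Nonempty (Fin n ⊕ Fin m) := Fintype.card_pos_iff.mp (by simpa using hnm)
  exact (Real.exp_le_exp.2 (opNorm_le_opNorm_dilation A)).trans
    (IsHermitian.exp_opNorm_le_trace_exp (dilation_isHermitian A) (trace_exp_neg_dilation A))

theorem exp_mul_opNorm_le_mul_obexp (hnm : 0 < n + m) {c : ℝ} (hc : 0 ≤ c)
    (A : Matrix (Fin n) (Fin m) ℝ) :
    Real.exp (c * opNorm A) ≤ (n + m : ℕ) * obexp (c • A) := by
  have hk : ((n + m : ℕ) : ℝ) ≠ 0 := by positivity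
  have hsmul := opNorm_smul c A
  rw [abs_of_nonneg hc] at hsmul
  rw [obexp, mul_inv_cancel_left₀ hk, ← hsmul]
  exact exp_opNorm_le_trace_exp_dilation hnm (c • A)

end Dilation

theorem measure_le_lintegral_of_one_le {Ω : Type*} [MeasurableSpace Ω] (μ : Measure Ω)
    {S : Set Ω} (hS : MeasurableSet S) {f : Ω → ENNReal} (hf : ∀ ω ∈ S, 1 ≤ f ω) :
    μ S ≤ ∫⁻ ω, f ω ∂μ :=
  calc μ S = ∫⁻ _ in S, 1 ∂μ := (setLIntegral_one S).symm
    _ ≤ ∫⁻ ω in S, f ω ∂μ := setLIntegral_mono' hS hf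
    _ ≤ ∫⁻ ω, f ω ∂μ := setLIntegral_le_lintegral S f

theorem measure_opNorm_ge_le_mul_lintegral_obexp {Ω : Type*} [MeasurableSpace Ω]
    (μ : Measure Ω) {n m : ℕ} (hnm : 0 < n + m) {Z : Ω → Matrix (Fin n) (Fin m) ℝ}
    (hZ : ∀ i j, Measurable fun ω => Z ω i j) {c : ℝ} (hc : 0 ≤ c) (t : ℝ) :
    μ {ω | t ≤ opNorm (Z ω)} ≤ ENNReal.ofReal ((n + m : ℕ) * Real.exp (-(c * t))) *
      ∫⁻ ω, ENNReal.ofReal (obexp (c • Z ω)) ∂μ := by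
  rw [← lintegral_const_mul' _ _ ENNReal.ofReal_ne_top]
  refine measure_le_lintegral_of_one_le μ (measurableSet_le measurable_const (measurable_opNorm hZ))
    fun ω hω => ?_
  rw [← ENNReal.ofReal_mul (by positivity), ← ENNReal.ofReal_one]
  refine ENNReal.ofReal_le_ofReal ?_
  calc (1 : ℝ) = Real.exp (-(c * t)) * Real.exp (c * t) := by rw [← Real.exp_add]; simp
    _ ≤ Real.exp (-(c * t)) * Real.exp (c * opNorm (Z ω)) := by gcongr; exact hω
    _ ≤ Real.exp (-(c * t)) * ((n + m : ℕ) * obexp (c • Z ω)) := by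
      gcongr; exact exp_mul_opNorm_le_mul_obexp hnm hc (Z ω)
    _ = _ := by ring

theorem matrix_mgf_tail_general
    {Ω : Type*} [MeasurableSpace Ω] (μ : Measure Ω)
    {n m : ℕ} (hnm : 0 < n + m)
    (Z : Ω → Matrix (Fin n) (Fin m) ℝ) (hmeas : ∀ i j, Measurable fun ω => Z ω i j)
    (a : ℝ) (ha : 0 < a)
    (hmgf : ∀ lam : ℝ,
      ∫⁻ ω, ENNReal.ofReal (obexp (lam • Z ω)) ∂μ ≤
        ENNReal.ofReal (Real.exp (lam ^ 2 * a ^ 2 / 2)))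
    (δ : ℝ) (hδ : δ ∈ Set.Ioo (0 : ℝ) 1) :
    μ {ω | a * Real.sqrt (2 * Real.log ((n + m : ℕ) / δ)) ≤ opNorm (Z ω)} ≤
      ENNReal.ofReal δ := by
  obtain ⟨hδ0, hδ1⟩ := hδ
  set k : ℝ := ((n + m : ℕ) : ℝ)
  set L := Real.log (k / δ)
  have hk : 1 ≤ k := Nat.one_le_cast.2 hnm
  have hL : 0 < L := Real.log_pos ((one_lt_div hδ0).2 (hδ1.trans_le hk))
  have hkL : k * Real.exp (-L) = δ := by
    rw [Real.exp_neg, Real.exp_log (by positivity)]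
    field_simp
  set t := a * √(2 * L) with ht
  set lam := √(2 * L) / a
  have hexponent : -(lam * t) + lam ^ 2 * a ^ 2 / 2 = -L := by
    have hlam : lam * a = √(2 * L) := div_mul_cancel₀ _ ha.ne'
    linear_combination ((lam * a - √(2 * L)) / 2) * hlam - ht * lam
      - Real.sq_sqrt (by positivity : 0 ≤ 2 * L) / 2
  calc _ ≤ ENNReal.ofReal (k * Real.exp (-(lam * t))) *
        ∫⁻ ω, ENNReal.ofReal (obexp (lam • Z ω)) ∂μ :=
      measure_opNorm_ge_le_mul_lintegral_obexp μ hnm hmeas (by positivity) _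
    _ ≤ ENNReal.ofReal (k * Real.exp (-(lam * t))) *
        ENNReal.ofReal (Real.exp (lam ^ 2 * a ^ 2 / 2)) := by gcongr; exact hmgf lam
    _ = ENNReal.ofReal δ := by
      rw [← ENNReal.ofReal_mul (by positivity), mul_assoc, ← Real.exp_add, hexponent, hkL]

/-- Matrix MGF-to-tail conversion: if
`E[‾exp(λZ)] ≤ exp(λ²a²/2)` for all `λ`, then
`P(‖Z‖ ≥ a√(2 log((n+m)/δ))) ≤ δ`, with `‖·‖` the operator norm. -/
theorem matrix_mgf_tail
    {Ω : Type*} [MeasurableSpace Ω] (μ : Measure Ω) [IsProbabilityMeasure μ]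
    {n m : ℕ} (hnm : 0 < n + m)
    (Z : Ω → Matrix (Fin n) (Fin m) ℝ) (hmeas : ∀ i j, Measurable fun ω => Z ω i j)
    (a : ℝ) (ha : 0 < a)
    (hmgf : ∀ lam : ℝ,
      ∫⁻ ω, ENNReal.ofReal (obexp (lam • Z ω)) ∂μ ≤
        ENNReal.ofReal (Real.exp (lam ^ 2 * a ^ 2 / 2)))
    (δ : ℝ) (hδ : δ ∈ Set.Ioo (0 : ℝ) 1) :
    μ {ω | a * Real.sqrt (2 * Real.log ((n + m : ℕ) / δ)) ≤ opNorm (Z ω)} ≤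
      ENNReal.ofReal δ :=
  matrix_mgf_tail_general μ hnm Z hmeas a ha hmgf δ hδ
end
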